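/- Variant of Gödel's first incompleteness theorem: if f : ℕ → Bool is not computable, then there is no computable derivation-checking relation D that is both sound and complete for statements about values of f. That is, for any computable D : ℕ → ℕ → Bool → Bool satisfying soundness (∀ x b, (∃ s, D s x b) → f x = b), there exists some x such that neither the statement 'f(x) = true' nor 'f(x) = false' has a derivation (¬∃ s, D s x (f x)). -/
import Mathlib

theorem stmt7 (f : ℕ → Bool) (hf : ¬ Computable f) (D : ℕ → ℕ → Bool → Bool)
    (hD : Computable fun p : ℕ × ℕ × Bool => D p.1 p.2.1 p.2.2)
    (sound : ∀ s x b, D s x b = true → f x = b) :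
    ∃ x, ¬ ∃ s, D s x (f x) = true := by
  by_contra h
  push_neg at h
  apply hf
  set g : ℕ → ℕ → Option Bool := fun a n =>
    if D n a true = true then some true
    else if D n a false = true then some false else none with hg
  have hDt : Computable fun a : ℕ × ℕ => D a.2 a.1 true :=
    hD.comp (Computable.pair Computable.snd
      (Computable.pair Computable.fst (Computable.const true)))
  have hDf : Computable fun a : ℕ × ℕ => D a.2 a.1 false :=
    hD.comp (Computable.pair Computable.snd
      (Computable.pair Computable.fst (Computable.const false)))
  have hgc : Computable₂ g := by
    have h1 : Computable₂ fun a n => bif D n a true then some true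
        else bif D n a false then some false else (none : Option Bool) :=
      Computable.cond hDt (Computable.const (some true))
        (Computable.cond hDf (Computable.const (some false)) (Computable.const none))
    refine h1.of_eq ?_
    intro a
    simp [hg, Bool.cond_eq_ite]
  have hpr : Partrec fun a => Nat.rfindOpt (g a) := Partrec.rfindOpt hgc
  apply hpr.of_eq_tot
  intro x
  have hdom : (Nat.rfindOpt (g x)).Dom := by
    rw [Nat.rfindOpt_dom]
    obtain ⟨s, hs⟩ := h x
    refine ⟨s, f x, ?_⟩
    simp only [hg]
    cases hfx : f x <;> rw [hfx] at hs <;> simp [hs]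
    cases hDst : D s x true with
    | false => rfl
    | true => have := sound s x true hDst; rw [this] at hfx; simp at hfx
  obtain ⟨n, hn⟩ := Nat.rfindOpt_spec (Part.get_mem hdom)
  have hb : (Nat.rfindOpt (g x)).get hdom = f x := by
    simp only [hg, Option.mem_def] at hn
    split_ifs at hn with h1 h2
    · rw [← Option.some.inj hn]; exact (sound n x true h1).symm
    · rw [← Option.some.inj hn]; exact (sound n x false h2).symm
  exact hb ▸ Part.get_mem hdom
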